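/- arXiv:1801.00311 — 2 statements merged into one kernel-verified Lean document; each statement's English description precedes it below -/
import Mathlib

section
/- For every real bound B, the set of number fields K (finite extensions of Q inside a fixed algebraic closure) whose discriminant has absolute value at most B is finite. -/
open NumberField

/-- **Hermite's theorem on discriminants**: for every real bound `B`, there are only finitely
many number fields (inside a fixed algebraic closure of `ℚ`) whose discriminant has absolute
value at most `B`. -/
theorem hermite_finiteness_of_discriminant (B : ℝ) :
    {K : { F : IntermediateField ℚ (AlgebraicClosure ℚ) // FiniteDimensional ℚ F } |
      haveI : NumberField K := @NumberField.mk _ _ inferInstance K.prop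
      |(discr K : ℝ)| ≤ B }.Finite := by
  refine Set.Finite.subset (NumberField.finite_of_discr_bdd (AlgebraicClosure ℚ) ⌈B⌉₊) ?_
  rintro ⟨K, hK₀⟩ hK₁
  haveI : NumberField K := @NumberField.mk _ _ inferInstance hK₀
  simp only [Set.mem_setOf_eq] at hK₁ ⊢
  have : (|discr K| : ℝ) ≤ (⌈B⌉₊ : ℝ) := by
    rw [← Int.cast_abs] at hK₁ ⊢
    exact hK₁.trans (Nat.le_ceil B)
  exact_mod_cast this
end

section
/- Every number field K ≠ Q has absolute discriminant of absolute value strictly greater than 1; equivalently, there are no nontrivial extensions of Q unramified at all finite primes. -/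
open NumberField

/-- **Minkowski's theorem**: every number field `K ≠ ℚ` has absolute discriminant of absolute
value strictly greater than `1` (so some finite prime ramifies in `K`). -/
theorem minkowski_discr_gt_one (K : Type) [Field K] [NumberField K]
    (h : 1 < Module.finrank ℚ K) : 1 < |discr K| := by
  have := NumberField.abs_discr_gt_two h
  omega
end
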